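/- arXiv:1210.0913 — 4 statements merged into one kernel-verified Lean document; each statement's English description precedes it below -/
import Mathlib

section
/- In the equilateral-triangle configuration with side length ℓ > 0, for each j ∈ {0,1,2}: the reveal point z_j is lightlike separated from both y_j and y_{j+1 mod 3} (the time difference ℓ/2 equals the spatial distance ℓ/2 in each case), so y_j ≼ z_j and y_{j+1 mod 3} ≼ z_j; consequently every pair of the causal diamonds D_j = D(y_j, z_j) is causally related (for each pair i ≠ j, there is a causal curve from D_i to D_j or from D_j to D_i). Moreover, ¬(y_j ≼ z_{j+1 mod 3}), since the spatial distance from a vertex of an equilateral triangle to the midpoint of the opposite side is (√3/2)ℓ > ℓ/2. -/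
/-- The causal relation on (2+1)-dimensional Minkowski space (units with `c = 1`):
`(t, x) ≼ (s, y)` iff `s - t ≥ ‖y - x‖`. -/
def causal (p q : ℝ × EuclideanSpace ℝ (Fin 2)) : Prop :=
  ‖q.2 - p.2‖ ≤ q.1 - p.1

/-- The causal diamond `D(y,z)`. -/
def diamond (y z : ℝ × EuclideanSpace ℝ (Fin 2)) : Set (ℝ × EuclideanSpace ℝ (Fin 2)) :=
  {p | causal y p ∧ causal p z}

/-- The call points: the vertices of an equilateral triangle of side `ℓ` at time `0`. -/
noncomputable def callPt (ℓ : ℝ) : Fin 3 → ℝ × EuclideanSpace ℝ (Fin 2) :=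
  ![(0, !₂[0, 0]), (0, !₂[ℓ, 0]), (0, !₂[ℓ / 2, Real.sqrt 3 / 2 * ℓ])]

/-- The reveal points: the midpoints of the edges of the triangle at time `ℓ / 2`,
`z j` over the midpoint of `y j` and `y (j+1)`. -/
noncomputable def revealPt (ℓ : ℝ) : Fin 3 → ℝ × EuclideanSpace ℝ (Fin 2) :=
  ![(ℓ / 2, !₂[ℓ / 2, 0]), (ℓ / 2, !₂[3 * ℓ / 4, Real.sqrt 3 / 4 * ℓ]),
    (ℓ / 2, !₂[ℓ / 4, Real.sqrt 3 / 4 * ℓ])]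

/-! The midpoint `z j` of the edge from `y j` to `y (j + 1)` is at spatial distance `ℓ / 2` from
both endpoints and is reached after time `ℓ / 2`, so both endpoints lie on its past light cone,
while the opposite vertex, at distance `√3 / 2 * ℓ > ℓ / 2`, does not. Two distinct diamonds are
`D i` and `D (i + 1)` up to order, and `y (i + 1) ∈ D (i + 1)` precedes `z i ∈ D i`. -/

lemma causal_refl (p : ℝ × EuclideanSpace ℝ (Fin 2)) : causal p p := by
  simp [causal]

lemma left_mem_diamond {y z : ℝ × EuclideanSpace ℝ (Fin 2)} (h : causal y z) :
    y ∈ diamond y z :=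
  ⟨causal_refl y, h⟩

lemma right_mem_diamond {y z : ℝ × EuclideanSpace ℝ (Fin 2)} (h : causal y z) :
    z ∈ diamond y z :=
  ⟨h, causal_refl z⟩

def CausallyRelated (A B : Set (ℝ × EuclideanSpace ℝ (Fin 2))) : Prop :=
  ∃ p ∈ A, ∃ q ∈ B, causal p q ∨ causal q p

lemma CausallyRelated.symm {A B : Set (ℝ × EuclideanSpace ℝ (Fin 2))}
    (h : CausallyRelated A B) : CausallyRelated B A := by
  obtain ⟨p, hp, q, hq, hpq⟩ := h
  exact ⟨q, hq, p, hp, hpq.symm⟩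

lemma causallyRelated_diamond_of_causal {y z y' z' : ℝ × EuclideanSpace ℝ (Fin 2)}
    (hyz : causal y z) (hyz' : causal y' z') (h : causal y' z) :
    CausallyRelated (diamond y z) (diamond y' z') :=
  ⟨z, right_mem_diamond hyz, y', left_mem_diamond hyz', Or.inr h⟩

lemma EuclideanSpace.norm_eq_of_sq_add_sq {x : EuclideanSpace ℝ (Fin 2)} {r : ℝ} (hr : 0 ≤ r)
    (h : x 0 ^ 2 + x 1 ^ 2 = r ^ 2) : ‖x‖ = r := by
  rw [← sq_eq_sq₀ (norm_nonneg x) hr, EuclideanSpace.real_norm_sq_eq, Fin.sum_univ_two, h]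

lemma fin_three_eq_add_one_or_eq_add_one_of_ne {i j : Fin 3} (h : i ≠ j) :
    j = i + 1 ∨ i = j + 1 := by
  fin_cases i <;> fin_cases j <;> simp_all

section Configuration

variable {ℓ : ℝ}

lemma revealPt_fst_sub_callPt_fst (i j : Fin 3) :
    (revealPt ℓ i).1 - (callPt ℓ j).1 = ℓ / 2 := by
  fin_cases i <;> fin_cases j <;> simp [revealPt, callPt]

lemma norm_revealPt_sub_callPt_self (hℓ : 0 ≤ ℓ) (j : Fin 3) :
    ‖(revealPt ℓ j).2 - (callPt ℓ j).2‖ = ℓ / 2 := by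
  refine EuclideanSpace.norm_eq_of_sq_add_sq (by positivity) ?_
  fin_cases j <;> simp [revealPt, callPt] <;> ring_nf <;> norm_num <;> ring

lemma norm_revealPt_sub_callPt_succ (hℓ : 0 ≤ ℓ) (j : Fin 3) :
    ‖(revealPt ℓ j).2 - (callPt ℓ (j + 1)).2‖ = ℓ / 2 := by
  refine EuclideanSpace.norm_eq_of_sq_add_sq (by positivity) ?_
  fin_cases j <;> simp [revealPt, callPt] <;> ring_nf <;> norm_num <;> ring

lemma norm_revealPt_succ_sub_callPt (hℓ : 0 ≤ ℓ) (j : Fin 3) :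
    ‖(revealPt ℓ (j + 1)).2 - (callPt ℓ j).2‖ = √3 / 2 * ℓ := by
  refine EuclideanSpace.norm_eq_of_sq_add_sq (by positivity) ?_
  fin_cases j <;> simp [revealPt, callPt] <;> ring_nf <;> norm_num <;> ring

lemma causal_callPt_revealPt_self (hℓ : 0 ≤ ℓ) (j : Fin 3) :
    causal (callPt ℓ j) (revealPt ℓ j) := by
  rw [causal, norm_revealPt_sub_callPt_self hℓ, revealPt_fst_sub_callPt_fst]

lemma causal_callPt_succ_revealPt (hℓ : 0 ≤ ℓ) (j : Fin 3) :
    causal (callPt ℓ (j + 1)) (revealPt ℓ j) := by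
  rw [causal, norm_revealPt_sub_callPt_succ hℓ, revealPt_fst_sub_callPt_fst]

lemma not_causal_callPt_revealPt_succ (hℓ : 0 < ℓ) (j : Fin 3) :
    ¬ causal (callPt ℓ j) (revealPt ℓ (j + 1)) := by
  have one_lt_sqrt_three : 1 < √3 := by rw [Real.lt_sqrt] <;> norm_num
  rw [causal, norm_revealPt_succ_sub_callPt hℓ.le, revealPt_fst_sub_callPt_fst, not_le]
  nlinarith

lemma causallyRelated_diamond_succ (hℓ : 0 ≤ ℓ) (j : Fin 3) :
    CausallyRelated (diamond (callPt ℓ j) (revealPt ℓ j))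
      (diamond (callPt ℓ (j + 1)) (revealPt ℓ (j + 1))) :=
  causallyRelated_diamond_of_causal (causal_callPt_revealPt_self hℓ j)
    (causal_callPt_revealPt_self hℓ (j + 1)) (causal_callPt_succ_revealPt hℓ j)

end Configuration

/-- In the equilateral-triangle configuration, each reveal point `z j` is lightlike
separated from both `y j` and `y (j+1)` (time difference `ℓ/2` equals spatial distance
`ℓ/2`), so `y j ≼ z j` and `y (j+1) ≼ z j`, while `¬ (y j ≼ z (j+1))`; and every pair
of the causal diamonds `D j = D(y j, z j)` is causally related. -/
theorem equilateral_triangle_configuration (ℓ : ℝ) (hℓ : 0 < ℓ) :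
    (∀ j : Fin 3,
      ((revealPt ℓ j).1 - (callPt ℓ j).1 = ‖(revealPt ℓ j).2 - (callPt ℓ j).2‖ ∧
        (revealPt ℓ j).1 - (callPt ℓ j).1 = ℓ / 2 ∧
        ‖(revealPt ℓ j).2 - (callPt ℓ j).2‖ = ℓ / 2) ∧
      ((revealPt ℓ j).1 - (callPt ℓ (j + 1)).1 = ‖(revealPt ℓ j).2 - (callPt ℓ (j + 1)).2‖ ∧
        ‖(revealPt ℓ j).2 - (callPt ℓ (j + 1)).2‖ = ℓ / 2) ∧
      causal (callPt ℓ j) (revealPt ℓ j) ∧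
      causal (callPt ℓ (j + 1)) (revealPt ℓ j) ∧
      ¬ causal (callPt ℓ j) (revealPt ℓ (j + 1))) ∧
    (∀ i j : Fin 3, i ≠ j →
      ∃ p ∈ diamond (callPt ℓ i) (revealPt ℓ i),
        ∃ q ∈ diamond (callPt ℓ j) (revealPt ℓ j), causal p q ∨ causal q p) := by
  have hℓ₀ := hℓ.le
  refine ⟨fun j => ⟨?_, ?_, causal_callPt_revealPt_self hℓ₀ j, causal_callPt_succ_revealPt hℓ₀ j,
    not_causal_callPt_revealPt_succ hℓ j⟩, ?_⟩
  · rw [revealPt_fst_sub_callPt_fst, norm_revealPt_sub_callPt_self hℓ₀]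
    exact ⟨rfl, rfl, rfl⟩
  · rw [revealPt_fst_sub_callPt_fst, norm_revealPt_sub_callPt_succ hℓ₀]
    exact ⟨rfl, rfl⟩
  · intro i j hij
    rcases fin_three_eq_add_one_or_eq_add_one_of_ne hij with rfl | rfl
    · exact causallyRelated_diamond_succ hℓ₀ i
    · exact (causallyRelated_diamond_succ hℓ₀ j).symm
end

section
/- In the equilateral-triangle configuration with side length ℓ > 0, there is no causal curve passing through all three causal diamonds: there do not exist points p_0 ∈ D_0, p_1 ∈ D_1, p_2 ∈ D_2 and a permutation σ of {0,1,2} such that p_{σ(0)} ≼ p_{σ(1)} ≼ p_{σ(2)}. -/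
lemma causal.trans {p q r : ℝ × EuclideanSpace ℝ (Fin 2)} (hpq : causal p q) (hqr : causal q r) :
    causal p r :=
  calc ‖r.2 - p.2‖ ≤ ‖r.2 - q.2‖ + ‖q.2 - p.2‖ := norm_sub_le_norm_sub_add_norm_sub _ _ _
    _ ≤ r.1 - p.1 := by unfold causal at hpq hqr; linarith

lemma norm_sub_add_norm_sub_le_of_causal {y y' q z z' : ℝ × EuclideanSpace ℝ (Fin 2)}
    (hy : causal y q) (hy' : causal y' q) (hz : causal q z) (hz' : causal q z') :
    ‖y.2 - y'.2‖ + ‖z.2 - z'.2‖ ≤ (z.1 - y.1) + (z'.1 - y'.1) := by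
  have past : ‖y.2 - y'.2‖ ≤ ‖q.2 - y.2‖ + ‖q.2 - y'.2‖ := by
    simpa only [dist_eq_norm] using dist_triangle_left y.2 y'.2 q.2
  have future : ‖z.2 - z'.2‖ ≤ ‖z.2 - q.2‖ + ‖z'.2 - q.2‖ := by
    simpa only [dist_eq_norm] using dist_triangle_right z.2 z'.2 q.2
  unfold causal at hy hy' hz hz'
  linarith

lemma EuclideanSpace.norm_vec_two_sub_vec_two (a b c d : ℝ) :
    ‖(!₂[a, b] : EuclideanSpace ℝ (Fin 2)) - !₂[c, d]‖ = √((a - c) ^ 2 + (b - d) ^ 2) := by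
  rw [← WithLp.toLp_sub]
  simp [EuclideanSpace.norm_eq, Fin.sum_univ_two]

lemma callPt_fst (ℓ : ℝ) (j : Fin 3) : (callPt ℓ j).1 = 0 := by
  fin_cases j <;> rfl

lemma revealPt_fst (ℓ : ℝ) (j : Fin 3) : (revealPt ℓ j).1 = ℓ / 2 := by
  fin_cases j <;> rfl

lemma norm_callPt_sub_callPt (ℓ : ℝ) {j k : Fin 3} (hjk : j ≠ k) :
    ‖(callPt ℓ j).2 - (callPt ℓ k).2‖ = |ℓ| := by
  fin_cases j <;> fin_cases k <;>
    simp [callPt, EuclideanSpace.norm_vec_two_sub_vec_two, mul_pow, div_pow] at hjk ⊢ <;>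
    rw [← Real.sqrt_sq_eq_abs] <;> congr 1 <;> ring

lemma norm_revealPt_sub_revealPt (ℓ : ℝ) {j k : Fin 3} (hjk : j ≠ k) :
    ‖(revealPt ℓ j).2 - (revealPt ℓ k).2‖ = |ℓ| / 2 := by
  rw [← abs_two, ← abs_div]
  fin_cases j <;> fin_cases k <;>
    simp [revealPt, EuclideanSpace.norm_vec_two_sub_vec_two, mul_pow, div_pow] at hjk ⊢ <;>
    rw [← Real.sqrt_sq_eq_abs] <;> congr 1 <;> ring

/-- In the equilateral-triangle configuration there is no causal curve through all
three causal diamonds: there are no points `p j ∈ D j` and no permutation `σ` of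
`{0,1,2}` with `p (σ 0) ≼ p (σ 1) ≼ p (σ 2)`. -/
theorem no_causal_curve_through_three_diamonds (ℓ : ℝ) (hℓ : 0 < ℓ) :
    ¬ ∃ (p : Fin 3 → ℝ × EuclideanSpace ℝ (Fin 2)) (σ : Equiv.Perm (Fin 3)),
        (∀ j : Fin 3, p j ∈ diamond (callPt ℓ j) (revealPt ℓ j)) ∧
        causal (p (σ 0)) (p (σ 1)) ∧ causal (p (σ 1)) (p (σ 2)) := by
  rintro ⟨p, σ, hp, h01, h12⟩
  have sides_le := norm_sub_add_norm_sub_le_of_causal ((hp (σ 0)).1.trans h01) (hp (σ 1)).1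
    (hp (σ 1)).2 (h12.trans (hp (σ 2)).2)
  rw [norm_callPt_sub_callPt ℓ (σ.injective.ne (by decide)),
    norm_revealPt_sub_revealPt ℓ (σ.injective.ne (by decide)),
    callPt_fst, callPt_fst, revealPt_fst, revealPt_fst, abs_of_pos hℓ] at sides_le
  linarith
end

section
/- Let n ≥ 3, let G' be the subdivision of the complete graph K_n with edge set E', fix u ∈ V, and let S_u = {(v,e) ∈ E' : u ∉ e}. Let a, b : E' → 𝔽₂ be any functions supported on S_u (a(f) = b(f) = 0 for f ∉ S_u), and define err : E' → 𝔽₂ by err(g) = b(g) + Σ_{f ∈ N_g} a(f) (sum in 𝔽₂). Then err(g) = 0 for every g ∈ E' of the form (u,d); in particular, since such elements exist, err is not the constant all-ones function on E'. (This establishes the first error-correction condition for the codeword-stabilized code used in the efficient summoning protocol: no Pauli error supported on the shares missing from reveal point z_u can induce the total Z error ∏_e Z_e.) -/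
/-- Candidate edges of the subdivision `G'` of the complete graph `Kₙ` on `V = Fin n`:
pairs `(v, e)` with `v` a vertex of `Kₙ` and `e` an unordered pair of vertices. -/
abbrev SubPair (n : ℕ) := Fin n × Sym2 (Fin n)

/-- `(v, e)` is an edge of the subdivision `G'` of `Kₙ` iff `e` is an edge of `Kₙ`
(an unordered pair of distinct vertices) and `v ∈ e`. -/
def memE' {n : ℕ} (f : SubPair n) : Prop := f.1 ∈ f.2 ∧ ¬ f.2.IsDiag

/-- Two edges `f = (v, e)` and `g = (w, d)` of `G'` are adjacent iff `f ≠ g` and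
they share an endpoint (`v = w` or `e = d`). -/
def adjE' {n : ℕ} (f g : SubPair n) : Prop := f ≠ g ∧ (f.1 = g.1 ∨ f.2 = g.2)

/-- `nbr g`: the set of edges of `G'` adjacent to `g`. -/
def nbr {n : ℕ} (g : SubPair n) : Set (SubPair n) := {f | memE' f ∧ adjE' f g}

/-- `f ∈ S_u`: `f = (v, e)` is an edge of `G'` with `u ∉ e`. -/
def memS {n : ℕ} (u : Fin n) (f : SubPair n) : Prop := memE' f ∧ u ∉ f.2

open scoped Classical

/-- First error-correction condition for the CWS code: if the `X`-part `a` and the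
`Z`-part `b` of a Pauli error are supported on `S_u`, then the induced `Z`-error
pattern `err g = b g + ∑_{f ∈ N_g} a f` vanishes on every edge of `G'` of the form
`(u, d)`; in particular `err` is not the all-ones function on the edges of `G'`. -/
theorem cws_first_condition (n : ℕ) (hn : 3 ≤ n) (u : Fin n)
    (a b : SubPair n → ZMod 2)
    (ha : ∀ f : SubPair n, ¬ memS u f → a f = 0)
    (hb : ∀ f : SubPair n, ¬ memS u f → b f = 0)
    (err : SubPair n → ZMod 2)
    (herr : ∀ g : SubPair n,
      err g = b g + ∑ f ∈ Finset.univ.filter (· ∈ nbr g), a f) :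
    (∀ d : Sym2 (Fin n), memE' (u, d) → err (u, d) = 0) ∧
    ¬ (∀ g : SubPair n, memE' g → err g = 1) := by
  have key : ∀ d : Sym2 (Fin n), memE' (u, d) → err (u, d) = 0 := by
    intro d hd
    rw [herr]
    have hb0 : b (u, d) = 0 := by
      apply hb
      intro hS
      exact hS.2 hd.1
    have hsum : ∑ f ∈ Finset.univ.filter (· ∈ nbr (u, d)), a f = 0 := by
      apply Finset.sum_eq_zero
      intro f hf
      simp only [Finset.mem_filter] at hf
      obtain ⟨hfE, hadj⟩ := hf.2
      apply ha
      intro hS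
      rcases hadj.2 with h1 | h2
      · exact hS.2 (by rw [show u = f.1 from h1.symm]; exact hfE.1)
      · exact hS.2 (h2 ▸ hd.1)
    rw [hb0, hsum, add_zero]
  refine ⟨key, ?_⟩
  intro hall
  -- find w ≠ u
  have : ∃ w : Fin n, w ≠ u := by
    have h2 : 1 < Fintype.card (Fin n) := by simpa using by omega
    exact Fintype.exists_ne_of_one_lt_card h2 u
  obtain ⟨w, hw⟩ := this
  have hE : memE' (u, s(u, w)) := by
    constructor
    · exact Sym2.mem_mk_left u w
    · simpa [Sym2.isDiag_iff_proj_eq] using fun h => hw h.symm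
  have h1 := hall _ hE
  have h0 := key _ hE
  rw [h0] at h1
  exact zero_ne_one h1
end

section
/- Let n ≥ 3, let G' be the subdivision of the complete graph K_n with edge set E', fix u ∈ V, and let S_u = {(v,e) ∈ E' : u ∉ e}. Let a, b : E' → 𝔽₂ be supported on S_u and define err : E' → 𝔽₂ by err(g) = b(g) + Σ_{f ∈ N_g} a(f). If err is identically zero, then Σ_{f ∈ E'} a(f) = 0 in 𝔽₂, i.e., the X-part a has even Hamming weight. (This establishes the second error-correction condition: any Pauli error supported on S_u whose induced Z-pattern is trivial has even X-weight and therefore commutes with ∏_e Z_e.) -/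
open scoped Classical

/-- Second error-correction condition for the CWS code: if the `X`-part `a` and the
`Z`-part `b` of a Pauli error are supported on `S_u` and the induced `Z`-error pattern
`err g = b g + ∑_{f ∈ N_g} a f` vanishes identically on the edges of `G'`, then the
`X`-part has even Hamming weight: `∑_{f ∈ E'} a f = 0` in `𝔽₂`. -/
theorem cws_second_condition (n : ℕ) (hn : 3 ≤ n) (u : Fin n)
    (a b : SubPair n → ZMod 2)
    (ha : ∀ f : SubPair n, ¬ memS u f → a f = 0)
    (hb : ∀ f : SubPair n, ¬ memS u f → b f = 0)
    (err : SubPair n → ZMod 2)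
    (herr : ∀ g : SubPair n,
      err g = b g + ∑ f ∈ Finset.univ.filter (· ∈ nbr g), a f)
    (hzero : ∀ g : SubPair n, memE' g → err g = 0) :
    ∑ f ∈ Finset.univ.filter (fun f : SubPair n => memE' f), a f = 0 := by
  classical
  set T : Finset (SubPair n) :=
    Finset.univ.filter (fun g : SubPair n => g.1 ≠ u ∧ g.2 = s(g.1, u)) with hT
  have hTmem : ∀ g : SubPair n, g ∈ T ↔ g.1 ≠ u ∧ g.2 = s(g.1, u) := by
    intro g; simp [hT]
  have hTE : ∀ g ∈ T, memE' g := by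
    intro g hg
    rw [hTmem] at hg
    refine ⟨?_, ?_⟩
    · rw [hg.2]; exact Sym2.mem_mk_left _ _
    · rw [hg.2]; simpa using hg.1
  have hsum0 : ∑ g ∈ T, err g = 0 :=
    Finset.sum_eq_zero fun g hg => hzero g (hTE g hg)
  have hbT : ∀ g ∈ T, b g = 0 := by
    intro g hg
    rw [hTmem] at hg
    apply hb
    intro hS
    exact hS.2 (by rw [hg.2]; exact Sym2.mem_mk_right _ _)
  have key : ∀ f : SubPair n, ∑ g ∈ T, (if f ∈ nbr g then a f else 0) = a f := by
    intro f
    by_cases haf : a f = 0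
    · rw [haf]; simp
    · have hfS : memS u f := by by_contra h; exact haf (ha f h)
      have hEf := hfS.1
      have hu : u ∉ f.2 := hfS.2
      have hf1u : f.1 ≠ u := fun h => hu (h ▸ hEf.1)
      have hfilt : T.filter (fun g => f ∈ nbr g) = {(f.1, s(f.1, u))} := by
        ext g
        simp only [Finset.mem_filter, Finset.mem_singleton]
        constructor
        · rintro ⟨hgT, hE, hne, hadj⟩
          rw [hTmem] at hgT
          rcases hadj with h1 | h2
          · refine Prod.ext h1.symm ?_
            rw [hgT.2, h1]
          · exact absurd (h2 ▸ (hgT.2 ▸ Sym2.mem_mk_right _ _ : u ∈ g.2)) hu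
        · rintro rfl
          refine ⟨?_, hEf, ?_, Or.inl rfl⟩
          · rw [hTmem]; exact ⟨hf1u, rfl⟩
          · intro h
            apply hu
            have : f.2 = s(f.1, u) := congrArg Prod.snd h
            rw [this]; exact Sym2.mem_mk_right _ _
      rw [← Finset.sum_filter, hfilt, Finset.sum_singleton]
  have hswap : ∑ g ∈ T, ∑ f ∈ Finset.univ.filter (· ∈ nbr g), a f
      = ∑ f : SubPair n, a f := by
    calc ∑ g ∈ T, ∑ f ∈ Finset.univ.filter (· ∈ nbr g), a f
        = ∑ g ∈ T, ∑ f : SubPair n, (if f ∈ nbr g then a f else 0) := by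
          refine Finset.sum_congr rfl fun g _ => ?_
          rw [Finset.sum_filter]
      _ = ∑ f : SubPair n, ∑ g ∈ T, (if f ∈ nbr g then a f else 0) := Finset.sum_comm
      _ = ∑ f : SubPair n, a f := Finset.sum_congr rfl fun f _ => key f
  have htotal : ∑ f : SubPair n, a f = 0 := by
    have : ∑ g ∈ T, err g
        = ∑ g ∈ T, b g + ∑ g ∈ T, ∑ f ∈ Finset.univ.filter (· ∈ nbr g), a f := by
      rw [← Finset.sum_add_distrib]
      exact Finset.sum_congr rfl fun g _ => herr g
    rw [hsum0, Finset.sum_eq_zero hbT, zero_add, hswap] at this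
    exact this.symm
  rw [← htotal]
  apply Finset.sum_subset (Finset.filter_subset _ _)
  intro f _ hf
  apply ha
  intro hS
  exact hf (Finset.mem_filter.mpr ⟨Finset.mem_univ _, hS.1⟩)
end
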